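/- arXiv:1707.02952 — 2 statements merged into one kernel-verified Lean document; each statement's English description precedes it below -/
import Mathlib

section
/- Let (W,S) be a finite Coxeter system and I,J ⊆ S. For all s,t ∈ I∖J one has X_{IJ}^s = X_{IJ}^t in Ω(W,S); that is, the edge element X_{IJ}^s depends only on I and J and not on the choice of s ∈ I∖J. -/
open scoped TensorProduct

noncomputable section

namespace WGraphPaper

variable (k : Type*) [CommRing k] {B B₁ B₂ : Type*}

/-! ### Gyoja's W-graph algebra with coefficients in `k`
(`Omega ℤ M` is the W-graph algebra `Ω(W,S)` itself, `Omega k M` is `kΩ`). -/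

/-- The free ring `k⟨e_b, x_b | b ∈ B⟩`; `Sum.inl b` encodes the generator `e_b` and
`Sum.inr b` encodes the generator `x_b`. -/
abbrev FreeGen (B : Type*) := FreeAlgebra k (B ⊕ B)

def eGen (b : B) : FreeGen k B := FreeAlgebra.ι k (Sum.inl b)
def xGen (b : B) : FreeGen k B := FreeAlgebra.ι k (Sum.inr b)

/-- `altProd a b n` is the alternating product `a * b * a * ⋯` with `n` factors. -/
def altProd {A : Type*} [Monoid A] : A → A → ℕ → A
  | _, _, 0 => 1
  | a, b, n + 1 => a * altProd b a n

/-- The braid commutator `Δ_m(a,b) = (a b a ⋯) - (b a b ⋯)` (`m` factors each). -/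
def braidComm {A : Type*} [Ring A] (m : ℕ) (a b : A) : A := altProd a b m - altProd b a m

/-- `ι(T_b) = -v⁻¹ e_b + v (1 - e_b) + x_b`, an element of `(FreeGen k B)[v,v⁻¹]`. -/
def iotaT (b : B) : LaurentPolynomial (FreeGen k B) :=
  LaurentPolynomial.C (-(eGen k b)) * LaurentPolynomial.T (-1)
    + LaurentPolynomial.C (1 - eGen k b) * LaurentPolynomial.T 1
    + LaurentPolynomial.C (xGen k b)

/-- The coefficient of `v^n` in a Laurent polynomial. -/
def lcoeff {R : Type*} [Semiring R] (p : LaurentPolynomial R) (n : ℤ) : R :=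
  (show ℤ →₀ R from p.coeff) n

/-- The defining relations of Gyoja's W-graph algebra: the relations (a) and (b) together
with the vanishing of all Laurent coefficients `y^γ(s,t)` of the braid commutators
`Δ_{m_{st}}(ι(T_s), ι(T_t))` (for `m_{st} < ∞`, i.e. `M s t ≠ 0`). -/
inductive OmegaRel (M : CoxeterMatrix B) : FreeGen k B → FreeGen k B → Prop
  | e_idem (b : B) : OmegaRel M (eGen k b * eGen k b) (eGen k b)
  | e_comm (b b' : B) : OmegaRel M (eGen k b * eGen k b') (eGen k b' * eGen k b)
  | ex (b : B) : OmegaRel M (eGen k b * xGen k b) (xGen k b)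
  | xe (b : B) : OmegaRel M (xGen k b * eGen k b) 0
  | braid (b b' : B) (h : M b b' ≠ 0) (γ : ℤ) :
      OmegaRel M (lcoeff (braidComm (M b b') (iotaT k b) (iotaT k b')) γ) 0

/-- Gyoja's W-graph algebra `Ω(W,S)` (for `k = ℤ`), resp. `kΩ(W,S)`, defined from
the Coxeter matrix of `(W,S)`. -/
abbrev Omega (M : CoxeterMatrix B) := RingQuot (OmegaRel k M)

/-- The image of the generator `e_b` in `Ω`. -/
def eOm (M : CoxeterMatrix B) (b : B) : Omega k M :=
  RingQuot.mkRingHom (OmegaRel k M) (eGen k b)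

/-- The image of the generator `x_b` in `Ω`. -/
def xOm (M : CoxeterMatrix B) (b : B) : Omega k M :=
  RingQuot.mkRingHom (OmegaRel k M) (xGen k b)

lemma commute_eOm (M : CoxeterMatrix B) (b b' : B) : Commute (eOm k M b) (eOm k M b') := by
  show _ = _
  rw [eOm, eOm, ← map_mul, ← map_mul]
  exact RingQuot.mkRingHom_rel (OmegaRel.e_comm b b')

lemma commute_oneSubEOm (M : CoxeterMatrix B) (b b' : B) :
    Commute (1 - eOm k M b) (1 - eOm k M b') :=
  (Commute.one_left _).sub_left ((Commute.one_right _).sub_right (commute_eOm k M b b'))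

variable [Fintype B] [DecidableEq B] [DecidableEq B₁] [DecidableEq B₂]

/-- The idempotent `E_I = (∏_{t ∈ I} e_t) (∏_{t ∈ S∖I} (1 - e_t))`. -/
def EOm (M : CoxeterMatrix B) (I : Finset B) : Omega k M :=
  (I.noncommProd (fun b => eOm k M b) (fun _ _ _ _ _ => commute_eOm k M _ _)) *
    ((Iᶜ).noncommProd (fun b => 1 - eOm k M b) (fun _ _ _ _ _ => commute_oneSubEOm k M _ _))

/-- The edge element `X_{IJ}^s = E_I x_s E_J`. -/
def XOm (M : CoxeterMatrix B) (I J : Finset B) (s : B) : Omega k M :=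
  EOm k M I * xOm k M s * EOm k M J

/-- `I ← J` is an edge of the compatibility graph `Q_W`: `I ∖ J ≠ ∅` and no element of
`I ∖ J` commutes (in `W`, i.e. `m_{st} = 2`) with an element of `J ∖ I`. -/
def QEdge (M : CoxeterMatrix B) (I J : Finset B) : Prop :=
  (I \ J).Nonempty ∧ ∀ s ∈ I \ J, ∀ t ∈ J \ I, M s t ≠ 2

/-- `I ⇆ J`: `I` and `J` are joined by a pair of transversal edges of `Q_W`. -/
def Transversal (M : CoxeterMatrix B) (I J : Finset B) : Prop :=
  QEdge M I J ∧ (J \ I).Nonempty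

/-- The generators of the subalgebra `Ψ(W,S)`: all `E_I` and all transversal edge
elements `X_{IJ}`. -/
def psiGens (M : CoxeterMatrix B) : Set (Omega k M) :=
  {a | ∃ I : Finset B, a = EOm k M I} ∪
    {a | ∃ I J : Finset B, ∃ s : B, Transversal M I J ∧ s ∈ I \ J ∧ a = XOm k M I J s}

/-- The subring `Ψ(W,S) ⊆ Ω(W,S)` generated by all `E_I` and all transversal edges. -/
def Psi (M : CoxeterMatrix B) : Subring (Omega k M) := Subring.closure (psiGens k M)

/-- The subalgebra `kΨ(W,S) ⊆ kΩ(W,S)` generated by all `E_I` and all transversal edges. -/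
def PsiAlg (M : CoxeterMatrix B) : Subalgebra k (Omega k M) :=
  Algebra.adjoin k (psiGens k M)

/-! ### Products of Coxeter systems -/

/-- The Coxeter matrix of the product `W₁ × W₂`, on `S = S₁ ⊔ S₂` (each element of `S₁`
commutes with each element of `S₂`). -/
def prodMatrix (M₁ : CoxeterMatrix B₁) (M₂ : CoxeterMatrix B₂) : CoxeterMatrix (B₁ ⊕ B₂) where
  M i j :=
    match i, j with
    | Sum.inl a, Sum.inl b => M₁ a b
    | Sum.inr a, Sum.inr b => M₂ a b
    | _, _ => 2
  isSymm := by
    unfold Matrix.IsSymm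
    ext i j
    rcases i with a | a <;> rcases j with b | b <;>
      simp only [Matrix.transpose_apply] <;>
      first
        | exact M₁.symmetric b a
        | exact M₂.symmetric b a
        | rfl
  diagonal i := by rcases i with a | a <;> simp [CoxeterMatrix.diagonal]
  off_diagonal i j h := by
    rcases i with a | a <;> rcases j with b | b
    · exact M₁.off_diagonal a b (by rintro rfl; exact h rfl)
    · simp
    · simp
    · exact M₂.off_diagonal a b (by rintro rfl; exact h rfl)

def inlEmb : B₁ ↪ B₁ ⊕ B₂ := ⟨Sum.inl, Sum.inl_injective⟩
def inrEmb : B₂ ↪ B₁ ⊕ B₂ := ⟨Sum.inr, Sum.inr_injective⟩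

/-- The subset `I ⊔ K` of `S = S₁ ⊔ S₂`, for `I ⊆ S₁` and `K ⊆ S₂`. -/
def fjoin (I : Finset B₁) (K : Finset B₂) : Finset (B₁ ⊕ B₂) :=
  I.map inlEmb ∪ K.map inrEmb

/-- The part `I₁ = I ∩ S₁` of a subset `I ⊆ S = S₁ ⊔ S₂`. -/
def part1 (I : Finset (B₁ ⊕ B₂)) : Finset B₁ :=
  I.preimage Sum.inl Sum.inl_injective.injOn

/-- The part `I₂ = I ∩ S₂` of a subset `I ⊆ S = S₁ ⊔ S₂`. -/
def part2 (I : Finset (B₁ ⊕ B₂)) : Finset B₂ :=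
  I.preimage Sum.inr Sum.inr_injective.injOn

variable (M₁ : CoxeterMatrix B₁) (M₂ : CoxeterMatrix B₂)

/-- `f` is the parabolic morphism `ι₁ : Ω₁ → Ω` (it sends `e_s ↦ e_s`, `x_s ↦ x_s`
for `s ∈ S₁`). -/
def Parab1Cond (f : Omega k M₁ → Omega k (prodMatrix M₁ M₂)) : Prop :=
  ∀ b : B₁, f (eOm k M₁ b) = eOm k (prodMatrix M₁ M₂) (Sum.inl b) ∧
    f (xOm k M₁ b) = xOm k (prodMatrix M₁ M₂) (Sum.inl b)

/-- `f` is the parabolic morphism `ι₂ : Ω₂ → Ω` (it sends `e_s ↦ e_s`, `x_s ↦ x_s`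
for `s ∈ S₂`). -/
def Parab2Cond (f : Omega k M₂ → Omega k (prodMatrix M₁ M₂)) : Prop :=
  ∀ b : B₂, f (eOm k M₂ b) = eOm k (prodMatrix M₁ M₂) (Sum.inr b) ∧
    f (xOm k M₂ b) = xOm k (prodMatrix M₁ M₂) (Sum.inr b)

/-- `t` is the morphism `τ : Ω → Ω₁ ⊗ Ω₂` of the paper: it sends `e_s ↦ e_s ⊗ 1`,
`x_s ↦ x_s ⊗ 1` for `s ∈ S₁` and `e_s ↦ 1 ⊗ e_s`, `x_s ↦ 1 ⊗ x_s` for `s ∈ S₂`. -/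
def TauCond (t : Omega k (prodMatrix M₁ M₂) → Omega k M₁ ⊗[k] Omega k M₂) : Prop :=
  (∀ b : B₁, t (eOm k (prodMatrix M₁ M₂) (Sum.inl b)) = eOm k M₁ b ⊗ₜ[k] 1 ∧
      t (xOm k (prodMatrix M₁ M₂) (Sum.inl b)) = xOm k M₁ b ⊗ₜ[k] 1) ∧
  (∀ b : B₂, t (eOm k (prodMatrix M₁ M₂) (Sum.inr b)) = 1 ⊗ₜ[k] eOm k M₂ b ∧
      t (xOm k (prodMatrix M₁ M₂) (Sum.inr b)) = 1 ⊗ₜ[k] xOm k M₂ b)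

/-- The coefficientwise extension of a ring homomorphism to Laurent polynomial rings. -/
def laurentMap {R A : Type*} [Semiring R] [Semiring A] (f : R →+* A) :
    LaurentPolynomial R →+* LaurentPolynomial A :=
  AddMonoidAlgebra.liftNCRingHom (LaurentPolynomial.C.comp f)
    { toFun := fun n => LaurentPolynomial.T (Multiplicative.toAdd n)
      map_one' := LaurentPolynomial.T_zero
      map_mul' := fun _ _ => LaurentPolynomial.T_add _ _ }
    (fun _ n => (LaurentPolynomial.commute_T (Multiplicative.toAdd n) _).symm)

/-- `k` is a good ring for `(W,S)`: it contains `2cos(2π/m_{st})` for all `s,t ∈ S`. -/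
def GoodRing (M : CoxeterMatrix B) (k : Subring ℂ) : Prop :=
  ∀ i j : B, M i j ≠ 0 → (2 * Complex.cos (2 * Real.pi / (M i j : ℂ))) ∈ k

/-- The irreducible complex characters of a finite group `G`. -/
def IrrChar (G : Type) [Group G] : Type :=
  {χ : G → ℂ // ∃ V : FDRep ℂ G, CategoryTheory.Simple V ∧ χ = FDRep.character V}

/-- The degree `d_λ` of an irreducible character `λ` (its value at `1`). -/
def IrrChar.degree {G : Type} [Group G] (χ : IrrChar G) : ℕ := ⌊(χ.val 1).re⌋₊

variable {ι : Type*}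

/-- (Z1): the `F^λ` are a decomposition of the identity into orthogonal idempotents. -/
def Z1 {A : Type*} [Ring A] (F : ι → A) : Prop :=
  (∀ l, F l * F l = F l) ∧ (∀ l m, l ≠ m → F l * F m = 0) ∧ ∑ᶠ l, F l = 1

variable [Fintype B] [DecidableEq B]

/-- (Z2): the decomposition is compatible with the one coming from the path-algebra
structure: `E_I F^λ = F^λ E_I`. -/
def Z2 (M : CoxeterMatrix B) (F : ι → Omega k M) : Prop :=
  ∀ l (I : Finset B), EOm k M I * F l = F l * EOm k M I

/-- (Z3), with a specified partial order `le`: only "downward edges" exist,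
i.e. `F^λ Ω F^μ ≠ 0 → λ ⪯ μ`. -/
def Z3At {A : Type*} [Ring A] (F : ι → A) (le : ι → ι → Prop) : Prop :=
  ∀ l m, (∃ a : A, F l * a * F m ≠ 0) → le l m

/-- (Z3): there is a partial order on `Irr(W)` such that only "downward edges" exist. -/
def Z3 {A : Type*} [Ring A] (F : ι → A) : Prop :=
  ∃ le : ι → ι → Prop, IsPartialOrder ι le ∧ Z3At F le

/-- (Z4): there are surjective `k`-algebra morphisms `k^{d_λ×d_λ} ↠ F^λ kΩ F^λ`. -/
def Z4 (M : CoxeterMatrix B) (F : ι → Omega k M) (d : ι → ℕ) : Prop :=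
  ∀ l, ∃ ψ : Matrix (Fin (d l)) (Fin (d l)) k →ₗ[k] Omega k M,
    (∀ x y, ψ (x * y) = ψ x * ψ y) ∧ ψ 1 = F l ∧
      Set.range ψ = {z | ∃ a : Omega k M, z = F l * a * F l}

/-- (Z5): `F^λ X_{IJ} F^λ ∈ kΨ(W,S)` for all edges `I ← J` of `Q_W`. -/
def Z5 (M : CoxeterMatrix B) (F : ι → Omega k M) : Prop :=
  ∀ l (I J : Finset B) (s : B), QEdge M I J → s ∈ I \ J →
    F l * XOm k M I J s * F l ∈ PsiAlg k M

/-- (Z6): `F^λ ∈ kΨ(W,S)`. -/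
def Z6 (M : CoxeterMatrix B) (F : ι → Omega k M) : Prop :=
  ∀ l, F l ∈ PsiAlg k M

/-- The family satisfies all of (Z1)–(Z6), i.e. the strong W-graph decomposition
conjecture holds via this family (`d` is the degree function on `Irr(W)`). -/
def StrongZ (M : CoxeterMatrix B) (F : ι → Omega k M) (d : ι → ℕ) : Prop :=
  Z1 F ∧ Z2 k M F ∧ Z3 F ∧ Z4 k M F d ∧ Z5 k M F ∧ Z6 k M F

/-- The maximal length (number of steps) of a strict chain for the relation `le`. -/
def orderHeight (le : ι → ι → Prop) : ℕ :=
  sSup {n | ∃ c : Fin (n + 1) → ι, Function.Injective c ∧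
    ∀ i j : Fin (n + 1), i < j → le (c i) (c j)}

/-!
Write `ιₛ = -v⁻¹ eₛ + v (1 - eₛ) + xₛ` and `m = m_{st}`. Multiply the braid relation
`ιₛ ιₜ ιₛ ⋯ = ιₜ ιₛ ιₜ ⋯` (`m` factors on each side) by `E_I` on the left and by `E_J` on the
right, and compare the coefficients of `v^{m-1}`. Since `s ∈ I`, `E_I (1 - eₛ) = 0`, so `E_I ιₛ`
has degree `0` with constant term `E_I xₛ`; the remaining `m - 1` factors contribute their leading
coefficients `1 - e_u`, which `E_J` absorbs because `u ∉ J`. So the left side gives `X_{IJ}^s`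
and the right side gives `X_{IJ}^t`.

The braid relation is available because `W` is finite: if `m_{st} = ∞`, then `s t` has infinite
order already in the geometric representation of `W`.
-/

open LaurentPolynomial

section LaurentDegree

variable {R : Type*} [Semiring R]

theorem _root_.LaurentPolynomial.le_of_mem_support_of_degree_le {p : R[T;T⁻¹]} {a n : ℤ}
    (hp : p.degree ≤ a) (hn : n ∈ p.coeff.support) : n ≤ a :=
  WithBot.coe_le_coe.mp ((Finset.le_max hn).trans hp)

theorem _root_.LaurentPolynomial.degree_add_le (p q : R[T;T⁻¹]) :
    (p + q).degree ≤ max p.degree q.degree := by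
  simpa only [degree, Finset.max_eq_sup_withBot] using AddMonoidAlgebra.supDegree_add_le

theorem _root_.LaurentPolynomial.degree_mul_le (p q : R[T;T⁻¹]) :
    (p * q).degree ≤ p.degree + q.degree := by
  simpa only [degree, Finset.max_eq_sup_withBot] using
    AddMonoidAlgebra.supDegree_mul_le (D := ((↑) : ℤ → WithBot ℤ))
      (fun _ _ => WithBot.coe_add _ _)

theorem _root_.LaurentPolynomial.coeff_mul_of_degree_le {p q : R[T;T⁻¹]} {a b : ℤ}
    (hp : p.degree ≤ a) (hq : q.degree ≤ b) :
    (p * q).coeff (a + b) = p.coeff a * q.coeff b := by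
  classical
  rw [AddMonoidAlgebra.coeff_mul, Finsupp.sum, Finset.sum_eq_single a, Finsupp.sum,
    Finset.sum_eq_single b, if_pos rfl]
  · intro n hn hne
    exact if_neg (by have := le_of_mem_support_of_degree_le hq hn; omega)
  · intro hb
    rw [Finsupp.notMem_support_iff.mp hb, mul_zero, ite_self]
  · intro n hn hne
    refine Finset.sum_eq_zero fun n' hn' => if_neg ?_
    have := le_of_mem_support_of_degree_le hp hn
    have := le_of_mem_support_of_degree_le hq hn'
    omega
  · intro ha
    simp [Finsupp.notMem_support_iff.mp ha]

theorem _root_.LaurentPolynomial.coeff_C_mul_T (a : R) (m n : ℤ) :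
    (C a * T m).coeff n = if m = n then a else 0 := by
  rw [← single_eq_C_mul_T]
  exact Finsupp.single_apply

theorem _root_.LaurentPolynomial.coeff_C (a : R) (n : ℤ) :
    (C a).coeff n = if 0 = n then a else 0 :=
  Finsupp.single_apply

end LaurentDegree

section LaurentMap

variable {R A : Type*} [Semiring R] [Semiring A]

theorem laurentMap_C_mul_T (f : R →+* A) (a : R) (n : ℤ) :
    laurentMap f (C a * T n) = C (f a) * T n := by
  rw [← single_eq_C_mul_T, laurentMap, AddMonoidAlgebra.liftNCRingHom_single]
  rfl

theorem laurentMap_C (f : R →+* A) (a : R) : laurentMap f (C a) = C (f a) := by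
  rw [← mul_one (C a), ← T_zero, laurentMap_C_mul_T, T_zero, mul_one]

theorem laurentMap_eq_mapRingHom (f : R →+* A) :
    laurentMap f = AddMonoidAlgebra.mapRingHom ℤ f := by
  refine AddMonoidAlgebra.ringHom_ext (fun r => ?_) (fun n => ?_) <;>
    rw [AddMonoidAlgebra.mapRingHom_single, single_eq_C_mul_T, single_eq_C_mul_T,
      laurentMap_C_mul_T]

theorem coeff_laurentMap (f : R →+* A) (p : R[T;T⁻¹]) (n : ℤ) :
    (laurentMap f p).coeff n = f (p.coeff n) := by
  rw [laurentMap_eq_mapRingHom, AddMonoidAlgebra.coeff_mapRingHom]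

end LaurentMap

section AltProd

theorem altProd_succ {A : Type*} [Monoid A] (a b : A) (n : ℕ) :
    altProd a b (n + 1) = a * altProd b a n := rfl

theorem map_altProd {A A' F : Type*} [Monoid A] [Monoid A'] [FunLike F A A']
    [MonoidHomClass F A A'] (f : F) (a b : A) (n : ℕ) :
    f (altProd a b n) = altProd (f a) (f b) n := by
  induction n generalizing a b with
  | zero => exact map_one f
  | succ n ih => rw [altProd_succ, map_mul, ih, altProd_succ]

theorem altProd_mul_eq_right {A : Type*} [Monoid A] {a b q : A} (ha : a * q = q) (hb : b * q = q)
    (n : ℕ) : altProd a b n * q = q := by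
  induction n generalizing a b with
  | zero => exact one_mul q
  | succ n ih => rw [altProd_succ, mul_assoc, ih hb ha, ha]

theorem degree_altProd_le_and_coeff {R : Type*} [Semiring R] {p q : R[T;T⁻¹]}
    (hp : p.degree ≤ 1) (hq : q.degree ≤ 1) (n : ℕ) :
    (altProd p q n).degree ≤ n ∧
      (altProd p q n).coeff n = altProd (p.coeff 1) (q.coeff 1) n := by
  induction n generalizing p q with
  | zero =>
    rw [altProd, altProd, ← map_one C, ← single_eq_C]
    exact ⟨degree_C_le 1, Finsupp.single_eq_same⟩
  | succ n ih =>
    obtain ⟨hdeg, hcoeff⟩ := ih hq hp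
    have hcast : ((n + 1 : ℕ) : ℤ) = 1 + n := by push_cast; ring
    rw [altProd_succ, altProd_succ, hcast, coeff_mul_of_degree_le hp hdeg, hcoeff]
    refine ⟨(degree_mul_le _ _).trans ?_, rfl⟩
    exact (add_le_add hp hdeg).trans_eq (by push_cast; exact add_comm _ _)

end AltProd

section IotaShape

variable {R : Type*} [Ring R]

def iotaOf (e x : R) : R[T;T⁻¹] := C (-e) * T (-1) + C (1 - e) * T 1 + C x

theorem degree_iotaOf_le (e x : R) : (iotaOf e x).degree ≤ 1 := by
  refine (degree_add_le _ _).trans (max_le ((degree_add_le _ _).trans (max_le ?_ ?_)) ?_)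
  · exact (degree_C_mul_T_le _ _).trans (by norm_num)
  · exact degree_C_mul_T_le _ _
  · exact (degree_C_le _).trans (by norm_num)

theorem coeff_iotaOf_one (e x : R) : (iotaOf e x).coeff 1 = 1 - e := by
  simp only [iotaOf, AddMonoidAlgebra.coeff_add, Finsupp.add_apply, coeff_C_mul_T, coeff_C]
  norm_num

theorem C_mul_iotaOf {P e : R} (hP : P * (1 - e) = 0) (x : R) :
    C P * iotaOf e x = C (P * -e) * T (-1) + C (P * x) := by
  simp only [iotaOf, mul_add, ← mul_assoc, ← map_mul, hP, map_zero, zero_mul, add_zero]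

theorem coeff_C_mul_altProd_iotaOf_mul_C {P Q e x e' x' : R} (hP : P * (1 - e) = 0)
    (hQ : (1 - e) * Q = Q) (hQ' : (1 - e') * Q = Q) (n : ℕ) :
    (C P * altProd (iotaOf e x) (iotaOf e' x') (n + 1) * C Q).coeff n = P * x * Q := by
  obtain ⟨hdeg, hcoeff⟩ :=
    degree_altProd_le_and_coeff (degree_iotaOf_le e' x') (degree_iotaOf_le e x) n
  have hhead : (C P * iotaOf e x).degree ≤ (0 : ℤ) := by
    rw [C_mul_iotaOf hP]
    exact (degree_add_le _ _).trans (max_le ((degree_C_mul_T_le _ _).trans (by norm_num))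
      (degree_C_le _))
  have htail : (altProd (iotaOf e' x') (iotaOf e x) n * C Q).degree ≤ (n + 0 : ℤ) :=
    (degree_mul_le _ _).trans (add_le_add hdeg (degree_C_le Q))
  calc (C P * altProd (iotaOf e x) (iotaOf e' x') (n + 1) * C Q).coeff n
      = (C P * iotaOf e x * (altProd (iotaOf e' x') (iotaOf e x) n * C Q)).coeff
          (0 + (n + 0)) := by
        rw [altProd_succ, zero_add, add_zero, mul_assoc, mul_assoc, mul_assoc]
    _ = P * x * Q := by
        rw [coeff_mul_of_degree_le hhead htail, coeff_mul_of_degree_le hdeg (degree_C_le Q),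
          hcoeff, coeff_iotaOf_one, coeff_iotaOf_one, C_mul_iotaOf hP]
        simp only [AddMonoidAlgebra.coeff_add, Finsupp.add_apply, coeff_C_mul_T, coeff_C]
        norm_num [mul_assoc, altProd_mul_eq_right hQ' hQ]

end IotaShape

open scoped Function in
theorem _root_.Finset.mul_noncommProd_of_isIdempotentElem {α β : Type*} [Monoid β]
    [DecidableEq α] {s : Finset α} {f : α → β} (comm : (s : Set α).Pairwise (Commute on f))
    {a : α} (ha : a ∈ s) (hf : IsIdempotentElem (f a)) :
    f a * s.noncommProd f comm = s.noncommProd f comm := by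
  rw [← s.mul_noncommProd_erase ha f comm, ← mul_assoc, hf.eq]

section GyojaAlgebra

variable (k : Type*) [CommRing k] {B : Type*} (M : CoxeterMatrix B)

theorem isIdempotentElem_eOm (b : B) : IsIdempotentElem (eOm k M b) := by
  rw [IsIdempotentElem, eOm, ← map_mul]
  exact RingQuot.mkRingHom_rel (OmegaRel.e_idem b)

theorem laurentMap_iotaT (b : B) :
    laurentMap (RingQuot.mkRingHom (OmegaRel k M)) (iotaT k b) =
      iotaOf (eOm k M b) (xOm k M b) := by
  rw [iotaT, iotaOf, map_add, map_add, laurentMap_C_mul_T, laurentMap_C_mul_T, laurentMap_C,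
    map_neg, map_sub, map_one]
  rfl

theorem altProd_iotaOf_comm {s t : B} (hst : M s t ≠ 0) :
    altProd (iotaOf (eOm k M s) (xOm k M s)) (iotaOf (eOm k M t) (xOm k M t)) (M s t) =
      altProd (iotaOf (eOm k M t) (xOm k M t)) (iotaOf (eOm k M s) (xOm k M s)) (M s t) := by
  rw [← sub_eq_zero, ← laurentMap_iotaT, ← laurentMap_iotaT, ← map_altProd, ← map_altProd,
    ← map_sub, ← braidComm]
  refine LaurentPolynomial.ext fun n => ?_
  rw [coeff_laurentMap]
  exact (RingQuot.mkRingHom_rel (OmegaRel.braid s t hst n)).trans (map_zero _)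

variable [Fintype B] [DecidableEq B] {k M}

theorem commute_eOm_EOm (u : B) (I : Finset B) : Commute (eOm k M u) (EOm k M I) :=
  (I.noncommProd_commute _ _ _ fun b _ => commute_eOm k M u b).mul_right
    (Iᶜ.noncommProd_commute _ _ _ fun b _ =>
      (Commute.one_right _).sub_right (commute_eOm k M u b))

theorem EOm_mul_one_sub_eOm {I : Finset B} {u : B} (hu : u ∈ I) :
    EOm k M I * (1 - eOm k M u) = 0 := by
  have h := Finset.mul_noncommProd_of_isIdempotentElem (f := fun b => eOm k M b)
    (fun _ _ _ _ _ => commute_eOm k M _ _) hu (isIdempotentElem_eOm k M u)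
  rw [mul_sub, mul_one, ← (commute_eOm_EOm u I).eq, EOm, ← mul_assoc, h, sub_self]

theorem one_sub_eOm_mul_EOm {J : Finset B} {u : B} (hu : u ∉ J) :
    (1 - eOm k M u) * EOm k M J = EOm k M J := by
  have hcomm := J.noncommProd_commute _ (fun _ _ _ _ _ => commute_eOm k M _ _) (1 - eOm k M u)
    fun b _ => (Commute.one_left _).sub_left (commute_eOm k M u b)
  have h := Finset.mul_noncommProd_of_isIdempotentElem (f := fun b => 1 - eOm k M b)
    (fun _ _ _ _ _ => commute_oneSubEOm k M _ _) (Finset.mem_compl.mpr hu)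
    (isIdempotentElem_eOm k M u).one_sub
  rw [EOm, ← mul_assoc, hcomm.eq, mul_assoc, h]

theorem XOm_eq_coeff {I J : Finset B} {s t : B} (hsI : s ∈ I) (hsJ : s ∉ J) (htJ : t ∉ J)
    (n : ℕ) : XOm k M I J s = (C (EOm k M I) *
      altProd (iotaOf (eOm k M s) (xOm k M s)) (iotaOf (eOm k M t) (xOm k M t)) (n + 1) *
        C (EOm k M J)).coeff n :=
  (coeff_C_mul_altProd_iotaOf_mul_C (EOm_mul_one_sub_eOm hsI) (one_sub_eOm_mul_EOm hsJ)
    (one_sub_eOm_mul_EOm htJ) n).symm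

theorem XOm_eq_of_ne_zero {I J : Finset B} {s t : B} (hs : s ∈ I \ J) (ht : t ∈ I \ J)
    (hst : M s t ≠ 0) : XOm k M I J s = XOm k M I J t := by
  rw [Finset.mem_sdiff] at hs ht
  obtain ⟨n, hn⟩ := Nat.exists_eq_add_one_of_ne_zero hst
  rw [XOm_eq_coeff hs.1 hs.2 ht.2 n, XOm_eq_coeff ht.1 ht.2 hs.2 n, ← hn,
    altProd_iotaOf_comm k M hst, M.symmetric]

end GyojaAlgebra

section Chebyshev

open Real Polynomial.Chebyshev

theorem _root_.Polynomial.Chebyshev.S_eval_two_mul_cos_pi_div_eq_zero {k : ℕ} (hk : 2 ≤ k) :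
    (S ℝ (k - 1)).eval (2 * cos (π / k)) = 0 := by
  have hsin : sin (π / k) ≠ 0 := by
    refine (sin_pos_of_pos_of_lt_pi (by positivity) ?_).ne'
    exact div_lt_self pi_pos (by exact_mod_cast hk)
  have h := S_two_mul_real_cos (π / k) (k - 1)
  rw [Int.cast_sub, Int.cast_natCast, Int.cast_one, sub_add_cancel,
    mul_div_cancel₀ _ (by positivity), sin_pi] at h
  exact (mul_eq_zero.mp h).resolve_right hsin

theorem _root_.Polynomial.Chebyshev.S_add_S_sub_one_eval_two_mul_cos_eq_zero {k : ℕ}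
    (hk : 1 ≤ k) :
    (S ℝ k).eval (2 * cos (2 * π / (2 * k + 1))) +
      (S ℝ (k - 1)).eval (2 * cos (2 * π / (2 * k + 1))) = 0 := by
  set φ := 2 * π / (2 * k + 1) with hφ
  have hsin : sin φ ≠ 0 := by
    refine (sin_pos_of_pos_of_lt_pi (by positivity) ?_).ne'
    rw [hφ, div_lt_iff₀ (by positivity)]
    have : (1 : ℝ) ≤ k := by exact_mod_cast hk
    nlinarith [pi_pos]
  have hsum : ((k : ℝ) + 1) * φ = 2 * π - k * φ := by
    rw [hφ]; field_simp; ring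
  have h1 := S_two_mul_real_cos φ k
  have h2 := S_two_mul_real_cos φ (k - 1)
  push_cast at h1 h2
  rw [hsum, sin_two_pi_sub] at h1
  rw [sub_add_cancel] at h2
  have : ((S ℝ k).eval (2 * cos φ) + (S ℝ (k - 1)).eval (2 * cos φ)) * sin φ = 0 := by
    rw [add_mul, h1, h2, neg_add_cancel]
  exact (mul_eq_zero.mp this).resolve_right hsin

end Chebyshev

section ReflectionPairs

open Real Module Polynomial.Chebyshev

variable {V : Type*} [AddCommGroup V] [Module ℝ V] {x y : V} {f g : Dual ℝ V}
  (hf : f x = 2) (hg : g y = 2)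

theorem _root_.Module.reflection_mul_reflection_sq_eq_one (hfy : f y = 0) (hgx : g x = 0) :
    (reflection hf * reflection hg) ^ 2 = 1 := by
  ext z
  simp only [pow_two, LinearEquiv.mul_apply, reflection_apply, map_sub, map_smul, hf, hg, hfy, hgx,
    LinearEquiv.coe_one, id_eq]
  module

theorem _root_.Module.reflection_mul_reflection_pow_eq_one {m : ℕ} (hm : 3 ≤ m)
    (h : f y * g x = 4 * cos (π / m) ^ 2) : (reflection hf * reflection hg) ^ m = 1 := by
  have ht : 2 * cos (2 * π / m) = f y * g x - 2 := by
    rw [h, mul_div_assoc, cos_two_mul]; ring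
  apply LinearEquiv.toLinearMap_injective
  -- Both Chebyshev coefficients in this formula for `(r₁ r₂) ^ m` have a vanishing factor.
  rw [reflection_mul_reflection_pow hf hg m _ ht]
  obtain ⟨k, rfl | rfl⟩ := Nat.even_or_odd' m
  · have e1 : ((2 * k : ℕ) - 2 : ℤ) / 2 = k - 1 := by omega
    have e2 : ((2 * k : ℕ) - 1 : ℤ) / 2 = k - 1 := by omega
    have hS : (S ℝ (k - 1)).eval (2 * cos (2 * π / (2 * k : ℕ))) = 0 := by
      rw [Nat.cast_mul, Nat.cast_two, mul_div_mul_left _ _ two_ne_zero]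
      exact S_eval_two_mul_cos_pi_div_eq_zero (by omega)
    rw [e1, e2, hS, zero_mul, zero_mul, zero_smul, zero_smul, add_zero, add_zero]
    rfl
  · have e1 : ((2 * k + 1 : ℕ) - 2 : ℤ) / 2 = k - 1 := by omega
    have e2 : ((2 * k + 1 : ℕ) - 1 : ℤ) / 2 = k := by omega
    have e3 : ((2 * k + 1 : ℕ) - 3 : ℤ) / 2 = k - 1 := by omega
    have e4 : ((2 * k + 1 : ℕ) : ℤ) / 2 = k := by omega
    have hS : (S ℝ k).eval (2 * cos (2 * π / (2 * k + 1 : ℕ))) +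
        (S ℝ (k - 1)).eval (2 * cos (2 * π / (2 * k + 1 : ℕ))) = 0 := by
      push_cast
      exact S_add_S_sub_one_eval_two_mul_cos_eq_zero (by omega)
    rw [e1, e2, e3, e4, hS, mul_zero, mul_zero, zero_smul, zero_smul, add_zero, add_zero]
    rfl

theorem _root_.Module.reflection_mul_reflection_pow_apply_self_of_eq_four (h : f y * g x = 4)
    (n : ℕ) :
    ((reflection hf * reflection hg) ^ n) x = (2 * n + 1 : ℝ) • x - (n * g x) • y := by
  rw [reflection_mul_reflection_pow_apply_self hf hg n 2 (by rw [h]; norm_num), S_eval_two,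
    S_eval_two]
  push_cast
  match_scalars <;> ring

end ReflectionPairs

section GeometricRepresentation

open Real CoxeterMatrix

variable {B : Type*} (M : CoxeterMatrix B)

/-- The Gram matrix `-cos (π / m_{ij})` of the geometric representation; for `m_{ij} = 0` the
junk value `π / 0 = 0` yields the usual entry `-1`. -/
def _root_.CoxeterMatrix.cosGram : Matrix B B ℝ := fun i j => -cos (π / M i j)

theorem _root_.CoxeterMatrix.cosGram_self (i : B) : M.cosGram i i = 1 := by
  simp [cosGram]

variable [Fintype B] [DecidableEq B]

def _root_.CoxeterMatrix.coroot (i : B) : Module.Dual ℝ (B → ℝ) :=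
  (2 : ℝ) • (LinearMap.proj i ∘ₗ M.cosGram.mulVecLin)

theorem _root_.CoxeterMatrix.coroot_single (i j : B) :
    M.coroot i (Pi.single j 1) = 2 * M.cosGram i j := by
  simp [coroot]

theorem _root_.CoxeterMatrix.coroot_single_self (i : B) : M.coroot i (Pi.single i 1) = 2 := by
  rw [coroot_single, cosGram_self, mul_one]

def _root_.CoxeterMatrix.geometricReflection (i : B) : (B → ℝ) ≃ₗ[ℝ] (B → ℝ) :=
  Module.reflection (M.coroot_single_self i)

theorem _root_.CoxeterMatrix.coroot_mul_coroot (i j : B) :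
    M.coroot i (Pi.single j 1) * M.coroot j (Pi.single i 1) = 4 * cos (π / M i j) ^ 2 := by
  simp only [coroot_single, cosGram, M.symmetric j i]
  ring

theorem _root_.CoxeterMatrix.isLiftable_geometricReflection :
    M.IsLiftable M.geometricReflection := by
  intro i j
  rcases eq_or_ne i j with rfl | hij
  · rw [M.diagonal, pow_one]
    ext v : 1
    exact Module.involutive_reflection _ v
  have hprod := M.coroot_mul_coroot i j
  have h1 := M.off_diagonal i j hij
  rcases Nat.lt_or_ge (M i j) 3 with hm | hm
  · interval_cases hm' : M i j
    · exact pow_zero _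
    · exact absurd rfl h1
    · have hc : M.cosGram i j = 0 := by simp [cosGram, hm']
      have hc' : M.cosGram j i = 0 := by simp [cosGram, M.symmetric j i, hm']
      exact Module.reflection_mul_reflection_sq_eq_one _ _
        (by rw [coroot_single, hc, mul_zero]) (by rw [coroot_single, hc', mul_zero])
  · exact Module.reflection_mul_reflection_pow_eq_one _ _ hm hprod

theorem _root_.CoxeterMatrix.geometricReflection_mul_pow_ne_one {i j : B} (hij : i ≠ j)
    (h0 : M i j = 0) {n : ℕ} (hn : n ≠ 0) :
    (M.geometricReflection i * M.geometricReflection j) ^ n ≠ 1 := by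
  intro h
  have hprod : M.coroot i (Pi.single j 1) * M.coroot j (Pi.single i 1) = 4 := by
    rw [coroot_mul_coroot, h0]; simp
  have hα := Module.reflection_mul_reflection_pow_apply_self_of_eq_four
    (M.coroot_single_self i) (M.coroot_single_self j) hprod n
  rw [← geometricReflection, ← geometricReflection, h] at hα
  exact hn (by simpa [hij] using congrFun hα i)

end GeometricRepresentation

theorem _root_.CoxeterSystem.coxeterMatrix_ne_zero {B W : Type*} [Finite B] {M : CoxeterMatrix B}
    [Group W] [Finite W] (cs : CoxeterSystem M W) (i j : B) : M i j ≠ 0 := by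
  classical
  have := Fintype.ofFinite B
  intro h0
  have hij : i ≠ j := by rintro rfl; simp at h0
  have hpow := congrArg (cs.lift ⟨_, M.isLiftable_geometricReflection⟩)
    (pow_card_eq_one' (x := cs.simple i * cs.simple j))
  rw [map_pow, map_mul, cs.lift_apply_simple, cs.lift_apply_simple, map_one] at hpow
  exact M.geometricReflection_mul_pow_ne_one hij h0 Nat.card_pos.ne' hpow

/-- let `(W,S)` be a finite Coxeter system and `I, J ⊆ S`. For all
`s, t ∈ I ∖ J` one has `X_{IJ}^s = X_{IJ}^t` in `Ω(W,S)`: the edge element depends only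
on `I` and `J`. -/
theorem statement3 {B : Type*} [Fintype B] [DecidableEq B] (M : CoxeterMatrix B)
    {W : Type*} [Group W] [Finite W] (cs : CoxeterSystem M W)
    (I J : Finset B) (s t : B) (hs : s ∈ I \ J) (ht : t ∈ I \ J) :
    XOm ℤ M I J s = XOm ℤ M I J t :=
  XOm_eq_of_ne_zero hs ht (cs.coxeterMatrix_ne_zero s t)

end WGraphPaper

end
end

section
/- Let W = W₁ × W₂ be a finite Coxeter group with S = S₁ ⊔ S₂. If I ⇆ J is a pair of transversal edges in the compatibility graph Q_W, then the symmetric difference I Δ J is entirely contained in S₁ or entirely contained in S₂; equivalently, either I₂ = J₂ and I₁ ⇆ J₁ in Q_{W₁}, or I₁ = J₁ and I₂ ⇆ J₂ in Q_{W₂}. -/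
open scoped TensorProduct

noncomputable section

namespace WGraphPaper

variable (k : Type*) [CommRing k] {B B₁ B₂ : Type*}

variable [Fintype B] [DecidableEq B] [DecidableEq B₁] [DecidableEq B₂]

variable (M₁ : CoxeterMatrix B₁) (M₂ : CoxeterMatrix B₂)

variable {ι : Type*}

variable [Fintype B] [DecidableEq B]

section ProductCompatibilityGraph

variable {B₁ B₂ : Type*} {M₁ : CoxeterMatrix B₁} {M₂ : CoxeterMatrix B₂}
  {I J : Finset (B₁ ⊕ B₂)}

@[simp]
lemma mem_part1 {a : B₁} : a ∈ part1 I ↔ Sum.inl a ∈ I := Finset.mem_preimage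

@[simp]
lemma mem_part2 {b : B₂} : b ∈ part2 I ↔ Sum.inr b ∈ I := Finset.mem_preimage

variable [DecidableEq B₁] [DecidableEq B₂]

/-- Across the two factors `m_st = 2`, which the edge condition forbids. -/
lemma QEdge.isLeft_eq (h : QEdge (prodMatrix M₁ M₂) I J) {s t : B₁ ⊕ B₂}
    (hs : s ∈ I \ J) (ht : t ∈ J \ I) : s.isLeft = t.isLeft := by
  rcases s with a | a <;> rcases t with b | b <;>
    first
      | rfl
      | exact absurd rfl (h.2 _ hs _ ht)

lemma Transversal.isLeft_eq (h : Transversal (prodMatrix M₁ M₂) I J) {x y : B₁ ⊕ B₂}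
    (hx : x ∈ symmDiff I J) (hy : y ∈ symmDiff I J) : x.isLeft = y.isLeft := by
  obtain ⟨s, hs⟩ := h.1.1
  obtain ⟨t, ht⟩ := h.2
  have h_side : ∀ z ∈ symmDiff I J, z.isLeft = s.isLeft := by
    intro z hz
    rcases Finset.mem_symmDiff.mp hz with hz | hz
    · exact (h.1.isLeft_eq (Finset.mem_sdiff.mpr hz) ht).trans (h.1.isLeft_eq hs ht).symm
    · exact (h.1.isLeft_eq hs (Finset.mem_sdiff.mpr hz)).symm
  rw [h_side x hx, h_side y hy]

lemma Transversal.of_isLeft (h : Transversal (prodMatrix M₁ M₂) I J)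
    (h_left : ∀ x ∈ symmDiff I J, x.isLeft) :
    part2 I = part2 J ∧ Transversal M₁ (part1 I) (part1 J) := by
  have h_inl : ∀ x ∈ symmDiff I J, ∃ a, x = Sum.inl a := fun x hx =>
    Sum.isLeft_iff.mp (h_left x hx)
  refine ⟨?_, ⟨⟨?_, fun s hs t ht => ?_⟩, ?_⟩⟩
  · ext b
    simp only [mem_part2]
    by_contra hb
    obtain ⟨a, ha⟩ := h_inl (.inr b) (by rw [Finset.mem_symmDiff]; tauto)
    exact Sum.inr_ne_inl ha
  · obtain ⟨x, hx⟩ := h.1.1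
    obtain ⟨a, rfl⟩ := h_inl x (Finset.symmDiff_subset_sdiff hx)
    exact ⟨a, by simpa using hx⟩
  · exact h.1.2 (.inl s) (by simpa using hs) (.inl t) (by simpa using ht)
  · obtain ⟨x, hx⟩ := h.2
    obtain ⟨a, rfl⟩ := h_inl x (Finset.symmDiff_subset_sdiff' hx)
    exact ⟨a, by simpa using hx⟩

lemma Transversal.of_isRight (h : Transversal (prodMatrix M₁ M₂) I J)
    (h_right : ∀ x ∈ symmDiff I J, x.isRight) :
    part1 I = part1 J ∧ Transversal M₂ (part2 I) (part2 J) := by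
  have h_inr : ∀ x ∈ symmDiff I J, ∃ a, x = Sum.inr a := fun x hx =>
    Sum.isRight_iff.mp (h_right x hx)
  refine ⟨?_, ⟨⟨?_, fun s hs t ht => ?_⟩, ?_⟩⟩
  · ext b
    simp only [mem_part1]
    by_contra hb
    obtain ⟨a, ha⟩ := h_inr (.inl b) (by rw [Finset.mem_symmDiff]; tauto)
    exact Sum.inl_ne_inr ha
  · obtain ⟨x, hx⟩ := h.1.1
    obtain ⟨a, rfl⟩ := h_inr x (Finset.symmDiff_subset_sdiff hx)
    exact ⟨a, by simpa using hx⟩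
  · exact h.1.2 (.inr s) (by simpa using hs) (.inr t) (by simpa using ht)
  · obtain ⟨x, hx⟩ := h.2
    obtain ⟨a, rfl⟩ := h_inr x (Finset.symmDiff_subset_sdiff' hx)
    exact ⟨a, by simpa using hx⟩

end ProductCompatibilityGraph

theorem statement4_general {B₁ B₂ : Type*} [DecidableEq B₁]
    [DecidableEq B₂] (M₁ : CoxeterMatrix B₁) (M₂ : CoxeterMatrix B₂)
    (I J : Finset (B₁ ⊕ B₂)) (h : Transversal (prodMatrix M₁ M₂) I J) :
    (part2 I = part2 J ∧ Transversal M₁ (part1 I) (part1 J)) ∨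
    (part1 I = part1 J ∧ Transversal M₂ (part2 I) (part2 J)) := by
  obtain ⟨s, hs⟩ := h.1.1
  have hs' : s ∈ symmDiff I J := Finset.symmDiff_subset_sdiff hs
  cases h_side : s.isLeft
  · exact .inr (h.of_isRight fun x hx =>
      Sum.isLeft_eq_false.mp ((h.isLeft_eq hx hs').trans h_side))
  · exact .inl (h.of_isLeft fun x hx => (h.isLeft_eq hx hs').trans h_side)

/-- let `W = W₁ × W₂` be a finite Coxeter group with `S = S₁ ⊔ S₂`.
If `I ⇆ J` is a pair of transversal edges of `Q_W` then either `I₂ = J₂` and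
`I₁ ⇆ J₁` in `Q_{W₁}`, or `I₁ = J₁` and `I₂ ⇆ J₂` in `Q_{W₂}` (the symmetric difference
is entirely contained in `S₁`, resp. `S₂`). -/
theorem statement4 {B₁ B₂ : Type*} [Fintype B₁] [DecidableEq B₁] [Fintype B₂]
    [DecidableEq B₂] (M₁ : CoxeterMatrix B₁) (M₂ : CoxeterMatrix B₂)
    {W₁ W₂ : Type*} [Group W₁] [Group W₂] [Finite W₁] [Finite W₂]
    (cs₁ : CoxeterSystem M₁ W₁) (cs₂ : CoxeterSystem M₂ W₂)
    (cs : CoxeterSystem (prodMatrix M₁ M₂) (W₁ × W₂))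
    (I J : Finset (B₁ ⊕ B₂)) (h : Transversal (prodMatrix M₁ M₂) I J) :
    (part2 I = part2 J ∧ Transversal M₁ (part1 I) (part1 J)) ∨
    (part1 I = part1 J ∧ Transversal M₂ (part2 I) (part2 J)) :=
  statement4_general M₁ M₂ I J h

end WGraphPaper

end
end
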